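/- For every 0 < p < ∞, the set (ℓ^∞ \ ℓ^p) ∪ {0} contains a dense linear subspace of ℓ^∞ of dimension continuum. -/

import Mathlib

/-!
Fix a continuum-sized family of infinite subsets of `ℕ` with pairwise finite intersections (the
branches of the binary tree, coded in `ℕ`). No nontrivial linear combination of their indicators
tends to zero, since on all but finitely many points of one of the sets it takes a fixed nonzero
value; so modulo `c₀` these indicators are linearly independent. Given a subspace `V` of
dimension `< 𝔠`, some small multiple of one of them, added to any `x`, leaves `c₀ + V`. As
`ℓ^∞` has only `𝔠` elements, a transfinite recursion of length `𝔠` through all balls picks in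
each ball a vector outside `c₀ +` the span of the earlier ones. These vectors span a dense
subspace of dimension `𝔠` meeting `c₀`, which contains `ℓ^p`, only in `0`.
-/

open Cardinal Set Filter Topology
open scoped ENNReal lp

universe u

theorem WellFoundedLT.exists_fun_forall_Iio {ι M : Type*} [Preorder ι] [WellFoundedLT ι]
    (Φ : (i : ι) → (Iio i → M) → M → Prop) (h : ∀ i g, ∃ e, Φ i g e) :
    ∃ F : ι → M, ∀ i, Φ i (fun j => F j) (F i) := by
  let F : ι → M := wellFounded_lt.fix fun i IH => (h i fun j => IH j j.2).choose
  refine ⟨F, fun i => ?_⟩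
  rw [show F i = _ from wellFounded_lt.fix_eq _ i]
  exact (h i _).choose_spec

theorem linearIndependent_of_notMem_span_image_Iio {K M ι : Type*} [DivisionRing K]
    [AddCommGroup M] [Module K M] [LinearOrder ι] {v : ι → M}
    (hv : ∀ i, v i ∉ Submodule.span K (v '' Iio i)) : LinearIndependent K v := by
  classical
  rw [linearIndependent_iff]
  intro l hl
  by_contra hl0
  have hsupp : l.support.Nonempty := Finsupp.support_nonempty_iff.2 hl0
  set i := l.support.max' hsupp
  have hi : i ∈ l.support := l.support.max'_mem hsupp
  apply hv i
  have hrest : ∑ j ∈ l.support.erase i, l j • v j ∈ Submodule.span K (v '' Iio i) :=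
    Submodule.sum_mem _ fun j hj => Submodule.smul_mem _ _ <| Submodule.subset_span
      ⟨j, (l.support.le_max' j (Finset.mem_of_mem_erase hj)).lt_of_ne
        (Finset.ne_of_mem_erase hj), rfl⟩
  have hsum : l i • v i + ∑ j ∈ l.support.erase i, l j • v j = 0 := by
    rw [Finset.add_sum_erase _ (fun j => l j • v j) hi]
    simpa [Finsupp.linearCombination_apply, Finsupp.sum] using hl
  have hvi : v i = -(l i)⁻¹ • ∑ j ∈ l.support.erase i, l j • v j := by
    rw [neg_smul, ← smul_neg, ← eq_neg_of_add_eq_zero_left hsum, inv_smul_smul₀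
      (Finsupp.mem_support_iff.1 hi)]
  rw [hvi]
  exact Submodule.smul_mem _ _ hrest

theorem exists_add_smul_notMem_of_rank_lt {K : Type*} {ι Y : Type u} [DivisionRing K]
    [AddCommGroup Y] [Module K Y] {u : ι → Y} (hu : LinearIndependent K u) (hι : ℵ₀ ≤ #ι)
    {W : Submodule K Y} (hW : Module.rank K W < #ι) (y : Y) {δ : K} (hδ : δ ≠ 0) :
    ∃ i, y + δ • u i ∉ W := by
  by_contra! h
  obtain ⟨i₀⟩ := (infinite_iff.2 hι).nonempty
  have hmem : ∀ i, u i ∈ K ∙ u i₀ ⊔ W := fun i => by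
    have hdiff : u i - u i₀ = δ⁻¹ • ((y + δ • u i) - (y + δ • u i₀)) := by
      rw [add_sub_add_left_eq_sub, ← smul_sub, inv_smul_smul₀ hδ]
    rw [← add_sub_cancel (u i₀) (u i), hdiff]
    exact Submodule.add_mem _ (Submodule.mem_sup_left (Submodule.mem_span_singleton_self _))
      (Submodule.mem_sup_right (W.smul_mem _ (W.sub_mem (h i) (h i₀))))
  have hli : LinearIndependent K fun i => (⟨u i, hmem i⟩ : ↥(K ∙ u i₀ ⊔ W)) :=
    .of_comp (K ∙ u i₀ ⊔ W).subtype hu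
  have hle : #ι ≤ Module.rank K (K ∙ u i₀ ⊔ W :) := hli.cardinal_le_rank
  have hlt : Module.rank K (K ∙ u i₀ ⊔ W :) < #ι :=
    calc Module.rank K (K ∙ u i₀ ⊔ W :)
        ≤ Module.rank K (K ∙ u i₀) + Module.rank K W := Submodule.rank_add_le_rank_add_rank _ _
      _ < #ι := add_lt_of_lt hι
          ((rank_span_le _).trans_lt (by simpa using one_lt_aleph0.trans_le hι)) hW
  exact hle.not_gt hlt

theorem exists_mem_ball_notMem_of_rank_lt {X Y ι : Type u} [SeminormedAddCommGroup X]
    [NormedSpace ℝ X] [AddCommGroup Y] [Module ℝ Y] (f : X →ₗ[ℝ] Y) {U : ι → X}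
    (hU : ∀ i, ‖U i‖ ≤ 1) (hli : LinearIndependent ℝ (f ∘ U)) (hι : ℵ₀ ≤ #ι)
    {W : Submodule ℝ Y} (hW : Module.rank ℝ W < #ι) (x : X) {ε : ℝ} (hε : 0 < ε) :
    ∃ e ∈ Metric.ball x ε, f e ∉ W := by
  obtain ⟨i, hi⟩ := exists_add_smul_notMem_of_rank_lt hli hι hW (f x) (half_pos hε).ne'
  refine ⟨x + (ε / 2) • U i, ?_, by simpa using hi⟩
  rw [Metric.mem_ball, dist_eq_norm, add_sub_cancel_left, norm_smul,
    Real.norm_of_nonneg (half_pos hε).le]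
  calc ε / 2 * ‖U i‖ ≤ ε / 2 * 1 := by gcongr; exact hU i
    _ < ε := by linarith

theorem exists_submodule_rank_eq_disjoint_ker {K : Type*} {X Y S : Type u} [DivisionRing K]
    [AddCommGroup X] [Module K X] [AddCommGroup Y] [Module K Y] (f : X →ₗ[K] Y)
    {κ : Cardinal.{u}} (T : S → Set X) [Nonempty S] (hS : #S ≤ κ)
    (hT : ∀ s (W : Submodule K Y), Module.rank K W < κ → ∃ e ∈ T s, f e ∉ W) :
    ∃ E : Submodule K X, Module.rank K E = κ ∧ Disjoint E (LinearMap.ker f) ∧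
      ∀ s, (T s ∩ E).Nonempty := by
  obtain ⟨σ, hσ⟩ : ∃ σ : κ.ord.ToType → S, σ.Surjective := by
    obtain ⟨g⟩ := le_def _ _ |>.1 (hS.trans_eq (mk_ord_toType κ).symm)
    exact ⟨Function.invFun g, Function.invFun_surjective g.injective⟩
  obtain ⟨F, hF⟩ := WellFoundedLT.exists_fun_forall_Iio
    (fun i (g : Iio i → X) e => e ∈ T (σ i) ∧ f e ∉ Submodule.span K (range (f ∘ g)))
    fun i g => hT _ _ <| (rank_span_le _).trans_lt <| mk_range_le.trans_lt <|
      (mk_Iio_lt i (by simp)).trans_eq (mk_ord_toType κ)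
  have hli : LinearIndependent K (f ∘ F) :=
    linearIndependent_of_notMem_span_image_Iio fun i => by
      rw [image_eq_range]
      exact (hF i).2
  refine ⟨Submodule.span K (range F), ?_, Submodule.range_ker_disjoint hli, fun s => ?_⟩
  · rw [rank_span (hli.of_comp f), mk_range_eq F (hli.of_comp f).injective, mk_ord_toType]
  · obtain ⟨i, rfl⟩ := hσ s
    exact ⟨F i, (hF i).1, Submodule.subset_span (mem_range_self i)⟩

theorem exists_dense_submodule_rank_eq_disjoint_ker {K : Type*} {X Y : Type u} [DivisionRing K]
    [AddCommGroup X] [Module K X] [PseudoMetricSpace X] [AddCommGroup Y] [Module K Y]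
    (f : X →ₗ[K] Y) {κ : Cardinal.{u}} (hκ : ℵ₀ ≤ κ) (hX : #X ≤ κ)
    (h : ∀ W : Submodule K Y, Module.rank K W < κ → ∀ x, ∀ ε > 0, ∃ e ∈ Metric.ball x ε, f e ∉ W) :
    ∃ E : Submodule K X, Dense (E : Set X) ∧ Module.rank K E = κ ∧
      Disjoint E (LinearMap.ker f) := by
  have hS : #(X × ℕ) ≤ κ := by
    simpa [mul_eq_self hκ] using mul_le_mul' hX hκ
  obtain ⟨E, hrank, hdisj, hE⟩ := exists_submodule_rank_eq_disjoint_ker f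
    (fun s => Metric.ball s.1 (1 / (s.2 + 1))) hS fun s W hW => h W hW _ _ Nat.one_div_pos_of_nat
  refine ⟨E, Metric.dense_iff.2 fun x ε hε => ?_, hrank, hdisj⟩
  obtain ⟨m, hm⟩ := exists_nat_one_div_lt hε
  exact (hE (x, m)).mono (inter_subset_inter_left _ (Metric.ball_subset_ball hm.le))

def branchSet (f : ℕ → Bool) : Set ℕ := range fun n => Encodable.encode ((List.range n).map f)

theorem branchSet_infinite (f : ℕ → Bool) : (branchSet f).Infinite :=
  infinite_range_of_injective fun n m h => by
    simpa using congrArg List.length (Encodable.encode_injective h)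

theorem finite_branchSet_inter {f g : ℕ → Bool} (h : f ≠ g) :
    (branchSet f ∩ branchSet g).Finite := by
  obtain ⟨k, hk⟩ := Function.ne_iff.1 h
  refine ((finite_Iic k).image fun n => Encodable.encode ((List.range n).map f)).subset ?_
  rintro _ ⟨⟨n, rfl⟩, m, hm⟩
  have hfg : (List.range m).map g = (List.range n).map f := Encodable.encode_injective hm
  obtain rfl : m = n := by simpa using congrArg List.length hfg
  refine ⟨m, mem_Iic.2 (not_lt.1 fun hkm => hk ?_), rfl⟩
  exact (List.map_inj_left.1 hfg k (List.mem_range.2 hkm)).symm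

namespace lp

variable {α ι : Type*}

def c₀ : Submodule ℝ ℓ^∞(α, ℝ) where
  carrier := {x | Tendsto (fun a => x a) cofinite (𝓝 0)}
  zero_mem' := tendsto_const_nhds
  add_mem' hx hy := by simpa using hx.add hy
  smul_mem' c _ hx := by simpa using hx.const_mul c

theorem mem_c₀ {x : ℓ^∞(α, ℝ)} : x ∈ c₀ ↔ Tendsto (fun a => x a) cofinite (𝓝 0) := Iff.rfl

theorem mem_c₀_of_summable_rpow {x : ℓ^∞(α, ℝ)} {p : ℝ} (hp : 0 < p)
    (hx : Summable fun a => |x a| ^ p) : x ∈ c₀ := by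
  have h := hx.tendsto_cofinite_zero.rpow_const (p := p⁻¹) (Or.inr (inv_nonneg.2 hp.le))
  rw [Real.zero_rpow (inv_ne_zero hp.ne')] at h
  refine (tendsto_zero_iff_abs_tendsto_zero _).2 ?_
  simpa [Function.comp_def, Real.rpow_rpow_inv (abs_nonneg _) hp.ne'] using h

theorem norm_indicator_one_apply_le (s : Set α) (a : α) : ‖s.indicator (1 : α → ℝ) a‖ ≤ 1 :=
  (norm_indicator_le_norm_self _ _).trans_eq norm_one

noncomputable def indicator (s : Set α) : ℓ^∞(α, ℝ) :=
  ⟨s.indicator 1, memℓp_infty ⟨1, forall_mem_range.2 (norm_indicator_one_apply_le s)⟩⟩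

theorem norm_indicator_le (s : Set α) : ‖indicator s‖ ≤ 1 :=
  norm_le_of_forall_le zero_le_one (norm_indicator_one_apply_le s)

theorem frequently_sum_mul_indicator_eq {B : ι → Set α} (hB : ∀ i, (B i).Infinite)
    (hBB : Pairwise fun i j => (B i ∩ B j).Finite) (c : ι →₀ ℝ) (i : ι) :
    ∃ᶠ a in cofinite, (c.sum fun j r => r * (B j).indicator 1 a) = c i := by
  classical
  set N := ⋃ j ∈ c.support.erase i, B i ∩ B j
  have hN : N.Finite := (c.support.erase i).finite_toSet.biUnion fun j hj =>
    hBB (Finset.ne_of_mem_erase hj).symm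
  refine (frequently_cofinite_iff_infinite.2 ((hB i).sdiff hN)).mono fun a ha => ?_
  rw [Finsupp.sum, Finset.sum_eq_single i]
  · simp [ha.1]
  · intro j hj hji
    rw [indicator_of_notMem, mul_zero]
    exact fun haj => ha.2 (mem_biUnion (Finset.mem_erase.2 ⟨hji, hj⟩) ⟨ha.1, haj⟩)
  · intro hi
    simp [Finsupp.notMem_support_iff.1 hi]

theorem linearIndependent_mkQ_c₀_indicator {B : ι → Set α} (hB : ∀ i, (B i).Infinite)
    (hBB : Pairwise fun i j => (B i ∩ B j).Finite) :
    LinearIndependent ℝ fun i => c₀.mkQ (indicator (B i)) := by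
  rw [linearIndependent_iff]
  intro l hl
  ext i
  by_contra hli
  set x := Finsupp.linearCombination ℝ (fun i => indicator (B i)) l
  have hx : x ∈ c₀ := by
    rw [← Submodule.ker_mkQ c₀, LinearMap.mem_ker, Finsupp.apply_linearCombination]
    exact hl
  have hxa : ∀ a, x a = l.sum fun j r => r * indicator (B j) a := fun a => by
    simpa only [x, evalₗ_apply, Function.comp_def, Finsupp.linearCombination_apply, smul_eq_mul]
      using Finsupp.apply_linearCombination ℝ (evalₗ (𝕜 := ℝ) (fun _ : α => ℝ) ∞ a)
        (fun i => indicator (B i)) l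
  obtain ⟨a, ha, hne⟩ := ((frequently_sum_mul_indicator_eq hB hBB l i).and_eventually
    ((mem_c₀.1 hx).eventually_ne (Ne.symm hli))).exists
  exact hne ((hxa a).trans ha)

theorem mk_lp_infty_nat_le : #ℓ^∞(ℕ, ℝ) ≤ 𝔠 :=
  (mk_le_of_injective (f := fun x : ℓ^∞(ℕ, ℝ) => (x : ℕ → ℝ)) Subtype.coe_injective).trans
    (by simp [mk_real])

end lp

theorem linfty_setminus_lp_maximal_dense_lineable
    (p : ℝ) (hp : 0 < p) :
    ∃ E : Submodule ℝ (lp (fun _ : ℕ => ℝ) ⊤),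
      Dense (E : Set (lp (fun _ : ℕ => ℝ) ⊤)) ∧
      Module.rank ℝ E = Cardinal.continuum ∧
      ∀ f ∈ E, f ≠ 0 → ¬ Summable (fun n => |f n| ^ p) := by
  have hcard : #(ℕ → Bool) = 𝔠 := by simp
  have hli := lp.linearIndependent_mkQ_c₀_indicator branchSet_infinite
    fun _ _ => finite_branchSet_inter
  obtain ⟨E, hdense, hrank, hdisj⟩ := exists_dense_submodule_rank_eq_disjoint_ker lp.c₀.mkQ
    aleph0_le_continuum lp.mk_lp_infty_nat_le fun W hW x ε hε =>
      exists_mem_ball_notMem_of_rank_lt _ (fun f => lp.norm_indicator_le (branchSet f)) hli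
        (hcard ▸ aleph0_le_continuum) (hcard ▸ hW) x hε
  rw [Submodule.ker_mkQ] at hdisj
  exact ⟨E, hdense, hrank, fun f hf hf0 hsum =>
    hf0 (Submodule.disjoint_def.1 hdisj f hf (lp.mem_c₀_of_summable_rpow hp hsum))⟩
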